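/- Let 0 < R₀ < R, let S = {x ∈ ℝ³ : |x| = R}, and let y ∈ S. Then for every x ∈ S the following are equivalent: (i) x ∈ S*(y); (ii) |x + y| < 2R₀; (iii) there exists t ∈ (0,1) with |y + t(x−y)| < R₀, i.e., the open segment joining y and x meets the open ball {ξ ∈ ℝ³ : |ξ| < R₀}. (This makes precise the paper's description of S*(y) as the shadow part of S for the light source placed at y when the light meets the non-transparent ball Ω₀ = {|x| < R₀} on its way; note that along the chord from y to x the function t ↦ |y + t(x−y)| attains its minimum |x+y|/2 at t = 1/2.) -/

import Mathlib

/-- The shadow region `S*(y) = {x ∈ S : (−y)·(x−y) > |x−y|·√(R²−R₀²)}`. -/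
def Sstar (R R₀ : ℝ) (y : EuclideanSpace ℝ (Fin 3)) : Set (EuclideanSpace ℝ (Fin 3)) :=
  {x | ‖x‖ = R ∧ ‖x - y‖ * Real.sqrt (R ^ 2 - R₀ ^ 2) < (inner ℝ (-y) (x - y) : ℝ)}

set_option maxHeartbeats 1000000 in
/-- For `x ∈ S`, the following are equivalent: (i) `x ∈ S*(y)`; (ii) `|x + y| < 2R₀`;
(iii) the open segment joining `y` and `x` meets the open ball of radius `R₀` centered at the
origin. -/
theorem stmt4 (R R₀ : ℝ) (hR₀ : 0 < R₀) (hR : R₀ < R)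
    (y : EuclideanSpace ℝ (Fin 3)) (hy : ‖y‖ = R) :
    ∀ x : EuclideanSpace ℝ (Fin 3), ‖x‖ = R →
      ((x ∈ Sstar R R₀ y ↔ ‖x + y‖ < 2 * R₀) ∧
       (x ∈ Sstar R R₀ y ↔ ∃ t ∈ Set.Ioo (0 : ℝ) 1, ‖y + t • (x - y)‖ < R₀)) := by
  intro x hx
  set a : ℝ := inner ℝ x y with ha
  have hd2 : ‖x - y‖ ^ 2 = 2 * R ^ 2 - 2 * a := by
    rw [norm_sub_sq_real, hx, hy]; ring
  have hn2 : ‖x + y‖ ^ 2 = 2 * R ^ 2 + 2 * a := by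
    rw [norm_add_sq_real, hx, hy]; ring
  have hyx : (inner ℝ y x : ℝ) = a := by rw [real_inner_comm]
  have hyy : (inner ℝ y y : ℝ) = R ^ 2 := by rw [real_inner_self_eq_norm_sq, hy]
  have h1 : (inner ℝ y (x - y) : ℝ) = a - R ^ 2 := by
    rw [inner_sub_right, hyx, hyy]
  have hinner : (inner ℝ (-y) (x - y) : ℝ) = R ^ 2 - a := by
    rw [inner_neg_left, h1]; ring
  set d : ℝ := ‖x - y‖ with hd
  set n : ℝ := ‖x + y‖ with hn
  have hd0 : 0 ≤ d := norm_nonneg _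
  have hn0 : 0 ≤ n := norm_nonneg _
  set s : ℝ := Real.sqrt (R ^ 2 - R₀ ^ 2) with hs
  have hs2 : s ^ 2 = R ^ 2 - R₀ ^ 2 := Real.sq_sqrt (by nlinarith)
  have hspos : 0 < s := Real.sqrt_pos.2 (by nlinarith)
  have hmem : x ∈ Sstar R R₀ y ↔ d * s < R ^ 2 - a := by
    simp only [Sstar, Set.mem_setOf_eq, hx, hinner, true_and]
    exact Iff.rfl
  have hft : ∀ t : ℝ, ‖y + t • (x - y)‖ ^ 2 = R ^ 2 + t * (t - 1) * (2 * R ^ 2 - 2 * a) := by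
    intro t
    rw [norm_add_sq_real, real_inner_smul_right, h1, norm_smul, hy, Real.norm_eq_abs,
      mul_pow, sq_abs, hd2]
    ring
  clear_value a d n s
  have key : (d * s < R ^ 2 - a) ↔ n < 2 * R₀ := by
    constructor
    · intro h
      have hdpos : 0 < d := by
        rcases hd0.lt_or_eq with h' | h'
        · exact h'
        · exfalso; nlinarith
      have hsd : s < d / 2 := by nlinarith
      have hsq : s ^ 2 < d ^ 2 / 4 := by nlinarith
      nlinarith [sq_nonneg (n - 2 * R₀)]
    · intro h
      have h4 : n ^ 2 < (2 * R₀) ^ 2 := by nlinarith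
      nlinarith [sq_nonneg (d - 2 * s)]
  refine ⟨hmem.trans key, (hmem.trans key).trans ?_⟩
  constructor
  · intro h
    refine ⟨1/2, ⟨by norm_num, by norm_num⟩, ?_⟩
    have heq : y + (1/2 : ℝ) • (x - y) = (1/2 : ℝ) • (x + y) := by module
    rw [heq, norm_smul, Real.norm_eq_abs]
    rw [show |(1/2 : ℝ)| = 1/2 by norm_num]
    linarith
  · rintro ⟨t, ⟨ht0, ht1⟩, ht⟩
    have h3 : R ^ 2 + t * (t - 1) * (2 * R ^ 2 - 2 * a) < R₀ ^ 2 := by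
      rw [← hft t]
      exact pow_lt_pow_left₀ ht (norm_nonneg _) two_ne_zero
    nlinarith [sq_nonneg (2 * t - 1), mul_pos ht0 (sub_pos.2 ht1), sq_nonneg (n - 2 * R₀)]
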